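/- Define φ(X) = Log((K+1)/2 + e^{2iθ}((K−1)/2) e^{−2i Im X}) and ξ(X) = Log((K+1)/(2K) − e^{2iθ}((K−1)/(2K)) e^{−2i Im X}). Then for all X ∈ ℂ: φ(X) + ξ(X + φ(X)) = 0 and ξ(X) + φ(X + ξ(X)) = 0. -/

import Mathlib

/-!
Write `w = e^{-2i Im X}` and `z = p + c w`, so that `φ(X) = Log z` with `p = (K+1)/2`,
`c = e^{2iθ}(K-1)/2`. Passing from `X` to `X + Log z` multiplies `w` by
`e^{-2i arg z} = z̄ / z`. For the coefficients `p', c'` of `ξ` one has `p p' + c' c̄ = 1` and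
`p' c + p c' = 0`, and since `|w| = 1` these give `p' + c' w z̄ / z = 1 / z`. As `Re z > 0`,
`Log (1 / z) = -Log z`. The same computation with the roles of the two pairs swapped gives the
second identity.
-/

open Complex ComplexConjugate

noncomputable def logPhase (p : ℝ) (c X : ℂ) : ℂ :=
  log (p + c * exp (-2 * X.im * I))

lemma norm_exp_neg_two_im_mul_I (X : ℂ) : ‖exp (-2 * X.im * I)‖ = 1 := by
  rw [norm_exp]; simp

lemma exp_neg_two_im_log_mul_I {z : ℂ} (hz : z ≠ 0) :
    exp (-2 * (log z).im * I) = conj z / z := by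
  have hconj : -2 * ((log z).im : ℂ) * I = conj (log z) - log z := by
    have h := sub_conj (log z)
    push_cast at h
    linear_combination h
  rw [hconj, exp_sub, exp_conj, exp_log hz]

lemma exp_neg_two_im_add_log_mul_I (X : ℂ) {z : ℂ} (hz : z ≠ 0) :
    exp (-2 * (X + log z).im * I) = exp (-2 * X.im * I) * (conj z / z) := by
  rw [← exp_neg_two_im_log_mul_I hz, ← exp_add, add_im, ofReal_add]
  ring_nf

lemma re_add_mul_pos {p : ℝ} {c w : ℂ} (hc : ‖c‖ < p) (hw : ‖w‖ = 1) :
    0 < ((p : ℂ) + c * w).re := by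
  have hcw : |(c * w).re| < p :=
    (abs_re_le_norm _).trans_lt (by rwa [norm_mul, hw, mul_one])
  rw [add_re, ofReal_re]
  linarith [(abs_lt.1 hcw).1]

lemma add_mul_conj_div_eq_inv {p p' : ℝ} {c c' w : ℂ} (hw : ‖w‖ = 1)
    (hz : (p : ℂ) + c * w ≠ 0)
    (h₁ : p * p' + c' * conj c = 1) (h₂ : p' * c + p * c' = 0) :
    p' + c' * (w * (conj ((p : ℂ) + c * w) / (p + c * w))) = ((p : ℂ) + c * w)⁻¹ := by
  have hw0 : w ≠ 0 := norm_ne_zero_iff.1 (by rw [hw]; exact one_ne_zero)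
  have hconj : conj ((p : ℂ) + c * w) = p + conj c * w⁻¹ := by
    rw [map_add, map_mul, conj_ofReal, ← RCLike.inv_eq_conj hw]
  rw [hconj]
  apply eq_inv_of_mul_eq_one_left
  rw [add_mul, mul_assoc c', mul_assoc w, div_mul_cancel₀ _ hz, mul_add w, mul_left_comm w,
    mul_inv_cancel₀ hw0]
  linear_combination h₁ + w * h₂

lemma logPhase_add_logPhase_add_self {p p' : ℝ} {c c' : ℂ} (hc : ‖c‖ < p)
    (h₁ : p * p' + c' * conj c = 1) (h₂ : p' * c + p * c' = 0) (X : ℂ) :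
    logPhase p c X + logPhase p' c' (X + logPhase p c X) = 0 := by
  have hw := norm_exp_neg_two_im_mul_I X
  have hz : (p : ℂ) + c * exp (-2 * X.im * I) ∈ slitPlane :=
    mem_slitPlane_iff.2 (Or.inl (re_add_mul_pos hc hw))
  rw [logPhase, logPhase, exp_neg_two_im_add_log_mul_I X (slitPlane_ne_zero hz),
    add_mul_conj_div_eq_inv hw (slitPlane_ne_zero hz) h₁ h₂, log_inv _ (slitPlane_arg_ne_pi hz),
    add_neg_cancel]

lemma logPhase_mul_ofReal_add_self {E : ℂ} (hE : ‖E‖ = 1) {p q p' q' : ℝ} (hq : |q| < p)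
    (h₁ : p * p' + q * q' = 1) (h₂ : p' * q + p * q' = 0) (X : ℂ) :
    logPhase p (E * q) X + logPhase p' (E * q') (X + logPhase p (E * q) X) = 0 := by
  have hEconj : conj E = E⁻¹ := (RCLike.inv_eq_conj hE).symm
  have hE0 : E ≠ 0 := norm_ne_zero_iff.1 (by rw [hE]; exact one_ne_zero)
  refine logPhase_add_logPhase_add_self ?_ ?_ ?_ X
  · rwa [norm_mul, hE, one_mul, norm_real, Real.norm_eq_abs]
  · rw [map_mul, hEconj, conj_ofReal, mul_mul_mul_comm, mul_inv_cancel₀ hE0, one_mul]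
    norm_cast
    linarith
  · have h₂' : (p' * q + p * q' : ℂ) = 0 := by exact_mod_cast h₂
    linear_combination E * h₂'

/-- With `φ(X) = Log((K+1)/2 + e^{2iθ}((K-1)/2) e^{-2i Im X})` and
`ξ(X) = Log((K+1)/(2K) - e^{2iθ}((K-1)/(2K)) e^{-2i Im X})`, we have
`φ(X) + ξ(X + φ(X)) = 0` and `ξ(X) + φ(X + ξ(X)) = 0` for all `X`. -/
theorem stmt5 (K θ : ℝ) (hK : 1 < K)
    (φ ξ : ℂ → ℂ)
    (hφ : ∀ X : ℂ, φ X = Complex.log (((K + 1) / 2 : ℂ)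
      + Complex.exp (2 * θ * Complex.I) * ((K - 1) / 2 : ℂ)
        * Complex.exp (-2 * X.im * Complex.I)))
    (hξ : ∀ X : ℂ, ξ X = Complex.log (((K + 1) / (2 * K) : ℂ)
      - Complex.exp (2 * θ * Complex.I) * ((K - 1) / (2 * K) : ℂ)
        * Complex.exp (-2 * X.im * Complex.I))) :
    ∀ X : ℂ, φ X + ξ (X + φ X) = 0 ∧ ξ X + φ (X + ξ X) = 0 := by
  set E := exp (2 * θ * I)
  have hE : ‖E‖ = 1 := by rw [norm_exp]; simp
  have hφ' : φ = logPhase ((K + 1) / 2) (E * ((K - 1) / 2 : ℝ)) := by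
    funext X; rw [hφ, logPhase]; push_cast; rfl
  have hξ' : ξ = logPhase ((K + 1) / (2 * K)) (E * ((1 - K) / (2 * K) : ℝ)) := by
    funext X; rw [hξ, logPhase]; push_cast; ring_nf
  have hK0 : K ≠ 0 := by positivity
  have h₁ : (K + 1) / 2 * ((K + 1) / (2 * K)) + (K - 1) / 2 * ((1 - K) / (2 * K)) = 1 := by
    field_simp; ring
  have h₂ : (K + 1) / (2 * K) * ((K - 1) / 2) + (K + 1) / 2 * ((1 - K) / (2 * K)) = 0 := by
    ring
  intro X
  rw [hφ', hξ']
  constructor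
  · refine logPhase_mul_ofReal_add_self hE ?_ h₁ h₂ X
    rw [abs_of_pos (by linarith)]
    linarith
  · refine logPhase_mul_ofReal_add_self hE ?_ (by linear_combination h₁)
      (by linear_combination h₂) X
    rw [abs_div, abs_of_pos (by positivity : 0 < 2 * K), abs_of_neg (by linarith : 1 - K < 0)]
    gcongr
    linarith
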